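/- arXiv:1104.0398 — 6 statements merged into one kernel-verified Lean document; each statement's English description precedes it below -/
import Mathlib

section
/- Let c ≥ 1, let H be a group, let A be a normal subgroup of H with A ≤ Z_c(H) (the marginal subgroup of H for the variety 𝒩_c), and set G = H/A. Let F be a free group with a surjective homomorphism φ: F → H, and let T = φ⁻¹(A), so that F together with the induced surjection F → G is a free presentation of G with kernel T. Then γ_{c+1}(H) ∩ A is a homomorphic image of the Baer-invariant 𝒩_cM(G): there exists a surjective group homomorphism from (T ∩ γ_{c+1}(F)) / [T, F, …, F] (c copies of F) onto γ_{c+1}(H) ∩ A. -/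
/-- `iteratedCommutator H c` is the subgroup `[H, G, …, G]` (`c` copies of `G`). -/
def iteratedCommutator {G : Type*} [Group G] (H : Subgroup G) : ℕ → Subgroup G
  | 0 => H
  | n + 1 => ⁅iteratedCommutator H n, (⊤ : Subgroup G)⁆

instance iteratedCommutator_normal {G : Type*} [Group G] (H : Subgroup G) [hH : H.Normal] :
    ∀ n, (iteratedCommutator H n).Normal
  | 0 => hH
  | n + 1 => letI := iteratedCommutator_normal H n; Subgroup.commutator_normal _ _

/-- The Baer invariant `𝒩_cM(G) = (T ∩ γ_{c+1}(F)) / [T, F, …, F]` (`c` copies of `F`),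
computed from a free presentation of `G` with kernel `T` inside the free group `F`,
realized as a subgroup of `F ⧸ [T, F, …, F]`. -/
def baerInvariant {F : Type*} [Group F] (c : ℕ) (T : Subgroup F) [T.Normal] :
    Subgroup (F ⧸ iteratedCommutator T c) :=
  Subgroup.map (QuotientGroup.mk' (iteratedCommutator T c)) (T ⊓ (⊤ : Subgroup F).lowerCentralSeries c)

lemma iteratedCommutator_mono {G : Type*} [Group G] {H K : Subgroup G} (h : H ≤ K) :
    ∀ n, iteratedCommutator H n ≤ iteratedCommutator K n
  | 0 => h
  | n + 1 => Subgroup.commutator_mono (iteratedCommutator_mono h n) le_rfl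

lemma iteratedCommutator_ucs {G : Type*} [Group G] :
    ∀ (k n : ℕ), iteratedCommutator (upperCentralSeries G (n + k)) k ≤ upperCentralSeries G n
  | 0, n => le_rfl
  | k + 1, n => by
    show ⁅iteratedCommutator (upperCentralSeries G (n + (k+1))) k, ⊤⁆ ≤ _
    have h1 : iteratedCommutator (upperCentralSeries G (n + (k+1))) k ≤
        upperCentralSeries G (n + 1) := by
      have := iteratedCommutator_ucs (G := G) k (n + 1)
      rwa [show n + 1 + k = n + (k + 1) by ring] at this
    refine le_trans (Subgroup.commutator_mono h1 le_rfl) ?_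
    rw [Subgroup.commutator_le]
    intro g hg h _
    exact (mem_upperCentralSeries_succ_iff).mp hg h

lemma map_iteratedCommutator {G G' : Type*} [Group G] [Group G'] (f : G →* G')
    (hf : Function.Surjective f) (K : Subgroup G) :
    ∀ n, Subgroup.map f (iteratedCommutator K n) = iteratedCommutator (Subgroup.map f K) n
  | 0 => rfl
  | n + 1 => by
    show Subgroup.map f ⁅iteratedCommutator K n, ⊤⁆ = ⁅iteratedCommutator (Subgroup.map f K) n, ⊤⁆
    rw [Subgroup.map_commutator, map_iteratedCommutator f hf K n,
      Subgroup.map_top_of_surjective f hf]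

lemma map_lowerCentralSeries {G G' : Type*} [Group G] [Group G'] (f : G →* G')
    (hf : Function.Surjective f) :
    ∀ n, Subgroup.map f ((⊤ : Subgroup G).lowerCentralSeries n) = (⊤ : Subgroup G').lowerCentralSeries n
  | 0 => by simpa using Subgroup.map_top_of_surjective f hf
  | n + 1 => by
    show Subgroup.map f ⁅(⊤ : Subgroup G).lowerCentralSeries n, ⊤⁆ = ⁅(⊤ : Subgroup G').lowerCentralSeries n, ⊤⁆
    rw [Subgroup.map_commutator, map_lowerCentralSeries f hf n,
      Subgroup.map_top_of_surjective f hf]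

/-- **Lemma 3.1 for the variety `𝒩_c`.**  If `A ⊴ H` with `A ≤ Z_c(H)` and `G = H/A`,
and `φ : F ↠ H` is a free presentation of `H` with `T = φ⁻¹(A)` (so that `F → G` is a
free presentation of `G` with kernel `T`), then `γ_{c+1}(H) ∩ A` is a homomorphic image
of the Baer invariant `𝒩_cM(G) = (T ∩ γ_{c+1}(F)) / [T, F, …, F]`. -/
theorem lemma_3_1_Nc (c : ℕ) (hc : 1 ≤ c)
    {H : Type*} [Group H] (A : Subgroup H) [A.Normal]
    (hA : A ≤ upperCentralSeries H c)
    {F : Type*} [Group F] [IsFreeGroup F]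
    (φ : F →* H) (hφ : Function.Surjective φ) :
    ∃ f : ↥(baerInvariant c (A.comap φ)) →* ↥((⊤ : Subgroup H).lowerCentralSeries c ⊓ A),
      Function.Surjective f := by
  set T := A.comap φ with hT
  have hmapT : Subgroup.map φ T = A := Subgroup.map_comap_eq_self_of_surjective hφ A
  have hbot : iteratedCommutator A c = ⊥ := by
    have h1 : iteratedCommutator A c ≤ iteratedCommutator (upperCentralSeries H c) c :=
      iteratedCommutator_mono hA c
    have h2 := iteratedCommutator_ucs (G := H) c 0
    simp only [Nat.zero_add] at h2
    exact le_bot_iff.mp (le_trans h1 h2)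
  have hker : iteratedCommutator T c ≤ φ.ker := by
    intro x hx
    have : φ x ∈ Subgroup.map φ (iteratedCommutator T c) := ⟨x, hx, rfl⟩
    rw [map_iteratedCommutator φ hφ T c, hmapT, hbot] at this
    simpa [MonoidHom.mem_ker] using this
  let ψ : (F ⧸ iteratedCommutator T c) →* H := QuotientGroup.lift _ φ hker
  have hmem : ∀ x : ↥(baerInvariant c T), ψ x ∈ (⊤ : Subgroup H).lowerCentralSeries c ⊓ A := by
    rintro ⟨_, y, ⟨hyT, hyγ⟩, rfl⟩
    refine ⟨?_, hyT⟩
    have : φ y ∈ Subgroup.map φ ((⊤ : Subgroup F).lowerCentralSeries c) := ⟨y, hyγ, rfl⟩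
    rwa [map_lowerCentralSeries φ hφ c] at this
  refine ⟨(ψ.comp (baerInvariant c T).subtype).codRestrict _ hmem, ?_⟩
  rintro ⟨h, hhγ, hhA⟩
  obtain ⟨y, hyγ, hy⟩ : h ∈ Subgroup.map φ ((⊤ : Subgroup F).lowerCentralSeries c) := by
    rw [map_lowerCentralSeries φ hφ c]; exact hhγ
  have hyT : y ∈ T := by simpa [hT, Subgroup.mem_comap, hy] using hhA
  refine ⟨⟨QuotientGroup.mk' _ y, y, ⟨hyT, hyγ⟩, rfl⟩, ?_⟩
  ext
  exact hy
end

section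
/- Let E be a group and B a subgroup of finite index n in E. If x ∈ Z₂(E) ∩ γ₃(E) (x lies in both the second center and the third lower central term of E), then for every y ∈ B one has [y, xⁿ] ∈ γ₃(B); in particular [y, xⁿ] ∈ B. -/
/-- The commutator `[a,b] = a⁻¹b⁻¹ab` (the convention of the paper). -/
def pcomm {G : Type*} [Group G] (a b : G) : G := a⁻¹ * b⁻¹ * a * b

open scoped commutatorElement

/-- The derived subgroup of a subgroup, pushed forward along the inclusion. -/
lemma map_commutator_subtype {G : Type*} [Group G] (H : Subgroup G) :
    (commutator ↥H).map H.subtype = ⁅H, H⁆ := by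
  rw [commutator_def, Subgroup.map_commutator, ← MonoidHom.range_eq_map,
    Subgroup.range_subtype]

/-- Transfer argument: a central element of the derived subgroup has its
`H.index`-th power inside `⁅H, H⁆`. -/
lemma pow_index_mem_commutator {G : Type*} [Group G] (H : Subgroup G) [H.FiniteIndex]
    (g : G) (hg : g ∈ Subgroup.center G) (hg' : g ∈ commutator G) :
    g ^ H.index ∈ ⁅H, H⁆ := by
  let φ : ↥H →* Abelianization ↥H := Abelianization.of
  have key : ∀ (k : ℕ) (g₀ : G), g₀⁻¹ * g ^ k * g₀ ∈ H → g₀⁻¹ * g ^ k * g₀ = g ^ k := by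
    intro k g₀ _
    have hc : g ^ k ∈ Subgroup.center G := pow_mem hg k
    rw [Subgroup.mem_center_iff.mp hc g₀⁻¹, inv_mul_cancel_right]
  have h1 : MonoidHom.transfer φ g = 1 :=
    Abelianization.commutator_subset_ker (MonoidHom.transfer φ) hg'
  have h2 := MonoidHom.transfer_eq_pow φ g key
  rw [h1] at h2
  have h3 : (⟨g ^ H.index, MonoidHom.transfer_eq_pow_aux g key⟩ : ↥H) ∈ commutator ↥H :=
    (QuotientGroup.eq_one_iff _).mp h2.symm
  rw [← map_commutator_subtype]
  exact ⟨_, h3, rfl⟩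

/-- **Lemma 3.5 for the variety `𝒩₂`.**  Let `B` be a subgroup of finite index `n` in
`E`.  If `x ∈ Z₂(E) ∩ γ₃(E)`, then for every `y ∈ B` one has `[y, xⁿ] ∈ γ₃(B)`; in
particular `[y, xⁿ] ∈ B`.  (Here `γ₃(B)` is viewed as a subgroup of `E` via the
inclusion `B ≤ E`.) -/
theorem lemma_3_5_N2 {E : Type*} [Group E] (B : Subgroup E) (n : ℕ) (hn : n ≠ 0)
    (hidx : B.index = n)
    (x : E) (hx : x ∈ upperCentralSeries E 2 ⊓ (⊤ : Subgroup E).lowerCentralSeries 2)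
    (y : E) (hy : y ∈ B) :
    pcomm y (x ^ n) ∈ ((⊤ : Subgroup ↥B).lowerCentralSeries 2).map B.subtype ∧
      pcomm y (x ^ n) ∈ B := by
  obtain ⟨hx1, hx2⟩ := hx
  haveI : B.FiniteIndex := ⟨hidx ▸ hn⟩
  set Z := Subgroup.center E with hZ
  let π : E →* E ⧸ Z := QuotientGroup.mk' Z
  have hπs : Function.Surjective π := QuotientGroup.mk'_surjective Z
  set B' : Subgroup (E ⧸ Z) := B.map π with hB'
  have hdvd : B'.index ∣ n := hidx ▸ B.index_map_dvd hπs
  haveI : B'.FiniteIndex := ⟨fun h => hn (Nat.eq_zero_of_zero_dvd (h ▸ hdvd))⟩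
  -- the image of `x` is central in `E ⧸ Z`
  have hcen : π x ∈ Subgroup.center (E ⧸ Z) := by
    rw [Subgroup.mem_center_iff]
    intro q
    obtain ⟨g, rfl⟩ := hπs q
    have hv := (mem_upperCentralSeries_succ_iff (n := 1)).mp hx1 g⁻¹
    rw [upperCentralSeries_one] at hv
    have hcomm := Subgroup.mem_center_iff.mp (inv_mem hv)
    have h2 : x⁻¹ * g⁻¹ * x * g ∈ Z := by
      have heq : x⁻¹ * g⁻¹ * x * g = x⁻¹ * (x * g⁻¹ * x⁻¹ * g⁻¹⁻¹)⁻¹ * x := by group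
      rw [heq, ← commutatorElement_def x g⁻¹, hcomm x⁻¹, inv_mul_cancel_right]
      exact inv_mem hv
    have key : ((g * x : E) : E ⧸ Z) = ((x * g : E) : E ⧸ Z) := by
      rw [QuotientGroup.eq]
      have : (g * x)⁻¹ * (x * g) = x⁻¹ * g⁻¹ * x * g := by group
      rw [this]; exact h2
    calc π g * π x = π (g * x) := (map_mul π g x).symm
      _ = π (x * g) := key
      _ = π x * π g := map_mul π x g
  -- the image of `x` lies in the derived subgroup of `E ⧸ Z`
  have hder : π x ∈ commutator (E ⧸ Z) := by
    have hxc : x ∈ commutator E := by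
      rw [← Subgroup.top_lowerCentralSeries_one]
      exact Subgroup.lowerCentralSeries_antitone _ (by norm_num) hx2
    have hle : Subgroup.map π (commutator E) ≤ commutator (E ⧸ Z) := by
      rw [commutator_def, commutator_def, Subgroup.map_commutator]
      exact Subgroup.commutator_mono le_top le_top
    exact hle ⟨x, hxc, rfl⟩
  -- transfer: `(π x) ^ n ∈ ⁅B', B'⁆`
  have hpow : (π x) ^ n ∈ ⁅B', B'⁆ := by
    obtain ⟨k, hk⟩ := hdvd
    rw [hk, pow_mul]
    exact pow_mem (pow_index_mem_commutator B' (π x) hcen hder) k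
  -- pull back: `x ^ n = c * z` with `c ∈ ⁅B, B⁆` and `z` central
  have hmap : ⁅B', B'⁆ = (⁅B, B⁆).map π := (Subgroup.map_commutator B B π).symm
  rw [hmap, ← map_pow] at hpow
  obtain ⟨c, hc, hπc⟩ := hpow
  have hzZ : c⁻¹ * x ^ n ∈ Z := by
    have h1 : π (c⁻¹ * x ^ n) = 1 := by
      rw [map_mul, map_inv, hπc, inv_mul_cancel]
    rwa [← QuotientGroup.ker_mk' Z, MonoidHom.mem_ker]
  set z := c⁻¹ * x ^ n with hzdef
  have hxn : x ^ n = c * z := by rw [hzdef]; group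
  have hzc : ∀ a : E, a * z = z * a := Subgroup.mem_center_iff.mp hzZ
  have hpc : pcomm y (x ^ n) = pcomm y c := by
    rw [hxn]
    unfold pcomm
    rw [mul_inv_rev]
    have hzc' : ∀ a : E, a * z⁻¹ = z⁻¹ * a := Subgroup.mem_center_iff.mp (inv_mem hzZ)
    calc y⁻¹ * (z⁻¹ * c⁻¹) * y * (c * z)
        = (y⁻¹ * z⁻¹) * (c⁻¹ * y * (c * z)) := by group
      _ = (z⁻¹ * y⁻¹) * (c⁻¹ * y * (c * z)) := by rw [hzc' y⁻¹]
      _ = z⁻¹ * ((y⁻¹ * c⁻¹ * y * c) * z) := by group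
      _ = z⁻¹ * (z * (y⁻¹ * c⁻¹ * y * c)) := by rw [hzc]
      _ = y⁻¹ * c⁻¹ * y * c := by group
  have hBB_le : ⁅B, B⁆ ≤ B := by
    rw [Subgroup.commutator_le]
    intro g₁ h₁ g₂ h₂
    rw [commutatorElement_def]
    exact mul_mem (mul_mem (mul_mem h₁ h₂) (inv_mem h₁)) (inv_mem h₂)
  have hcB : c ∈ B := hBB_le hc
  have hmem : pcomm y c ∈ ⁅⁅B, B⁆, B⁆ := by
    have : pcomm y c = ⁅y⁻¹, c⁻¹⁆ := by
      simp [pcomm, commutatorElement_def]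
    rw [this, Subgroup.commutator_comm]
    exact Subgroup.commutator_mem_commutator (inv_mem hy) (inv_mem hc)
  have hγ : ((⊤ : Subgroup ↥B).lowerCentralSeries 2).map B.subtype = ⁅⁅B, B⁆, B⁆ := by
    have h2 : (⊤ : Subgroup ↥B).lowerCentralSeries 2 = ⁅commutator ↥B, ⊤⁆ := by
      rw [show (2 : ℕ) = 1 + 1 from rfl, Subgroup.lowerCentralSeries_succ, Subgroup.top_lowerCentralSeries_one]
    rw [h2, Subgroup.map_commutator, map_commutator_subtype, ← MonoidHom.range_eq_map,
      Subgroup.range_subtype]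
  constructor
  · rw [hγ, hpc]
    exact hmem
  · rw [hpc]
    unfold pcomm
    exact mul_mem (mul_mem (mul_mem (inv_mem hy) (inv_mem hcB)) hy) hcB
end

section
/- Let c ≥ 2, let E be a group and B a subgroup of finite index n in E, and let L be a subgroup of E with L ≤ Z_c(E) ∩ γ_{c+1}(E). Let Lⁿ denote the subgroup of E generated by { gⁿ : g ∈ L }. Then [γ_{c-1}(B), Lⁿ] ≤ γ_{c+1}(B), where [γ_{c-1}(B), Lⁿ] is the subgroup of E generated by all commutators [u, v] with u ∈ γ_{c-1}(B) and v ∈ Lⁿ. -/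
open Subgroup Function MulAction
open scoped commutatorElement

section Aux

variable {G : Type*} [Group G]

/-- Three subgroups lemma, relative version: modulo a normal subgroup `K`. -/
private lemma three_subgroups {H₁ H₂ H₃ K : Subgroup G} [K.Normal]
    (h1 : ⁅⁅H₂, H₃⁆, H₁⁆ ≤ K) (h2 : ⁅⁅H₃, H₁⁆, H₂⁆ ≤ K) : ⁅⁅H₁, H₂⁆, H₃⁆ ≤ K := by
  have key : ∀ A C D : Subgroup G, (⁅⁅A, C⁆, D⁆ ≤ K ↔
      ⁅⁅A.map (QuotientGroup.mk' K), C.map (QuotientGroup.mk' K)⁆,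
        D.map (QuotientGroup.mk' K)⁆ = ⊥) := by
    intro A C D
    rw [← Subgroup.map_commutator, ← Subgroup.map_commutator, Subgroup.map_eq_bot_iff,
      QuotientGroup.ker_mk']
  rw [key] at h1 h2 ⊢
  exact Subgroup.commutator_commutator_eq_bot_of_rotate h1 h2

private lemma ucs_step (j : ℕ) :
    ⁅Subgroup.upperCentralSeries G (j + 1), (⊤ : Subgroup G)⁆ ≤ Subgroup.upperCentralSeries G j := by
  rw [Subgroup.commutator_le]
  intro x hx y _
  rw [commutatorElement_def]
  exact Subgroup.mem_upperCentralSeries_succ_iff.mp hx y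

private lemma lcs_ucs : ∀ i j : ℕ,
    ⁅(⊤ : Subgroup G).lowerCentralSeries i, Subgroup.upperCentralSeries G (i + j + 1)⁆ ≤ Subgroup.upperCentralSeries G j := by
  intro i
  induction i with
  | zero =>
    intro j
    rw [Subgroup.lowerCentralSeries_zero, Subgroup.commutator_comm]
    simpa using ucs_step (G := G) j
  | succ i ih =>
    intro j
    show ⁅⁅(⊤ : Subgroup G).lowerCentralSeries i, (⊤ : Subgroup G)⁆, Subgroup.upperCentralSeries G (i + 1 + j + 1)⁆ ≤
      Subgroup.upperCentralSeries G j
    refine three_subgroups ?_ ?_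
    · calc ⁅⁅(⊤ : Subgroup G), Subgroup.upperCentralSeries G (i + 1 + j + 1)⁆, (⊤ : Subgroup G).lowerCentralSeries i⁆
          ≤ ⁅Subgroup.upperCentralSeries G (i + j + 1), (⊤ : Subgroup G).lowerCentralSeries i⁆ := by
            refine Subgroup.commutator_mono ?_ le_rfl
            rw [Subgroup.commutator_comm]
            have e : i + 1 + j + 1 = (i + j + 1) + 1 := by omega
            rw [e]
            exact ucs_step _
        _ ≤ Subgroup.upperCentralSeries G j := by
            rw [Subgroup.commutator_comm]; exact ih j
    · calc ⁅⁅Subgroup.upperCentralSeries G (i + 1 + j + 1), (⊤ : Subgroup G).lowerCentralSeries i⁆, (⊤ : Subgroup G)⁆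
          ≤ ⁅Subgroup.upperCentralSeries G (j + 1), (⊤ : Subgroup G)⁆ := by
            refine Subgroup.commutator_mono ?_ le_rfl
            rw [Subgroup.commutator_comm]
            have e : i + 1 + j + 1 = i + (j + 1) + 1 := by omega
            rw [e]
            exact ih (j + 1)
        _ ≤ Subgroup.upperCentralSeries G j := ucs_step j

variable {c : ℕ}

private lemma comm_mem_center (hc : 2 ≤ c) {u z : G}
    (hu : u ∈ (⊤ : Subgroup G).lowerCentralSeries (c - 2)) (hz : z ∈ Subgroup.upperCentralSeries G c) :
    ⁅u, z⁆ ∈ Subgroup.center G := by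
  have h := lcs_ucs (G := G) (c - 2) 1
  have e : c - 2 + 1 + 1 = c := by omega
  rw [e, Subgroup.upperCentralSeries_one] at h
  exact h (Subgroup.commutator_mem_commutator hu hz)

private lemma comm_eq_one (hc : 2 ≤ c) {u w : G}
    (hu : u ∈ (⊤ : Subgroup G).lowerCentralSeries (c - 2)) (hw : w ∈ Subgroup.upperCentralSeries G (c - 1)) :
    ⁅u, w⁆ = 1 := by
  have h := lcs_ucs (G := G) (c - 2) 0
  have e : c - 2 + 0 + 1 = c - 1 := by omega
  rw [e] at h
  have h2 := h (Subgroup.commutator_mem_commutator hu hw)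
  rw [Subgroup.upperCentralSeries_zero] at h2
  simpa using h2

private lemma comm_mul (hc : 2 ≤ c) {u z₁ z₂ : G}
    (hu : u ∈ (⊤ : Subgroup G).lowerCentralSeries (c - 2)) (h2 : z₂ ∈ Subgroup.upperCentralSeries G c) :
    ⁅u, z₁ * z₂⁆ = ⁅u, z₁⁆ * ⁅u, z₂⁆ := by
  have hcen := comm_mem_center hc hu h2
  have key : ⁅u, z₁ * z₂⁆ = ⁅u, z₁⁆ * (z₁ * ⁅u, z₂⁆ * z₁⁻¹) := by group
  have hc2 : z₁ * ⁅u, z₂⁆ * z₁⁻¹ = ⁅u, z₂⁆ := by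
    rw [Subgroup.mem_center_iff.mp hcen z₁]
    group
  rw [key, hc2]

private lemma comm_conj (hc : 2 ≤ c) {u z : G} (x : G)
    (hu : u ∈ (⊤ : Subgroup G).lowerCentralSeries (c - 2)) (hz : z ∈ Subgroup.upperCentralSeries G c) :
    ⁅u, x⁻¹ * z * x⁆ = ⁅u, z⁆ := by
  have hd : z⁻¹ * x⁻¹ * z * x ∈ Subgroup.upperCentralSeries G (c - 1) := by
    have e : c = (c - 1) + 1 := by omega
    rw [e] at hz
    have h := Subgroup.mem_upperCentralSeries_succ_iff.mp
      ((Subgroup.upperCentralSeries G ((c - 1) + 1)).inv_mem hz) x⁻¹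
    simpa [mul_assoc, commutatorElement_def] using h
  have key : ⁅u, x⁻¹ * z * x⁆ = ⁅u, z * (z⁻¹ * x⁻¹ * z * x)⁆ := by group
  have hd' : z⁻¹ * x⁻¹ * z * x ∈ Subgroup.upperCentralSeries G c :=
    Subgroup.upperCentralSeries_mono G (by omega : c - 1 ≤ c) hd
  rw [key, comm_mul hc hu hd', comm_eq_one hc hu hd, mul_one]

private lemma comm_pow (hc : 2 ≤ c) {u z : G}
    (hu : u ∈ (⊤ : Subgroup G).lowerCentralSeries (c - 2)) (hz : z ∈ Subgroup.upperCentralSeries G c) :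
    ∀ k : ℕ, ⁅u, z ^ k⁆ = ⁅u, z⁆ ^ k := by
  intro k
  induction k with
  | zero => simp
  | succ k ih =>
    rw [pow_succ', comm_mul hc hu (pow_mem hz k), ih, ← pow_succ']

private lemma comm_inv (hc : 2 ≤ c) {u z : G}
    (hu : u ∈ (⊤ : Subgroup G).lowerCentralSeries (c - 2)) (hz : z ∈ Subgroup.upperCentralSeries G c) :
    ⁅u, z⁻¹⁆ = ⁅u, z⁆⁻¹ := by
  have h := comm_mul (z₁ := z) hc hu ((Subgroup.upperCentralSeries G c).inv_mem hz)
  rw [mul_inv_cancel] at h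
  simp only [commutatorElement_one_right] at h
  exact (inv_eq_of_mul_eq_one_right h.symm).symm

private lemma comm_list_prod (hc : 2 ≤ c) {u : G}
    (hu : u ∈ (⊤ : Subgroup G).lowerCentralSeries (c - 2)) :
    ∀ l : List G, (∀ z ∈ l, z ∈ Subgroup.upperCentralSeries G c) →
      ⁅u, l.prod⁆ = (l.map fun z => ⁅u, z⁆).prod := by
  intro l
  induction l with
  | nil => intro _; simp
  | cons z l ih =>
    intro h
    have hzl : l.prod ∈ Subgroup.upperCentralSeries G c :=
      list_prod_mem fun x hx => h x (List.mem_cons_of_mem _ hx)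
    rw [List.prod_cons, comm_mul hc hu hzl, List.map_cons, List.prod_cons,
      ih fun x hx => h x (List.mem_cons_of_mem _ hx)]

private lemma prod_map_pow {α : Type*} (x : G) :
    ∀ (l : List α) (f : α → ℕ), (l.map fun a => x ^ f a).prod = x ^ (l.map f).sum := by
  intro l f
  induction l with
  | nil => simp
  | cons a l ih =>
    rw [List.map_cons, List.prod_cons, List.map_cons, List.sum_cons, ih, pow_add]

private lemma lcs_comm_lcs1 (i : ℕ) :
    ⁅(⊤ : Subgroup G).lowerCentralSeries i, (⊤ : Subgroup G).lowerCentralSeries 1⁆ ≤ (⊤ : Subgroup G).lowerCentralSeries (i + 2) := by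
  have h2 : (⊤ : Subgroup G).lowerCentralSeries (i + 2) = ⁅⁅(⊤ : Subgroup G).lowerCentralSeries i, (⊤ : Subgroup G)⁆, (⊤ : Subgroup G)⁆ := rfl
  have h1 : (⊤ : Subgroup G).lowerCentralSeries 1 = ⁅(⊤ : Subgroup G), (⊤ : Subgroup G)⁆ := rfl
  rw [h2, h1, Subgroup.commutator_comm ((⊤ : Subgroup G).lowerCentralSeries i) ⁅(⊤ : Subgroup G), ⊤⁆]
  refine three_subgroups ?_ le_rfl
  rw [Subgroup.commutator_comm (⊤ : Subgroup G) ((⊤ : Subgroup G).lowerCentralSeries i)]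

end Aux

/-- **Lemma 3.5 (subgroup form) for the variety `𝒩_c`.**  Let `c ≥ 2`, let `B` be a
subgroup of finite index `n` in `E`, and let `L ≤ Z_c(E) ∩ γ_{c+1}(E)`.  If `Lⁿ` denotes
the subgroup generated by the `n`-th powers of elements of `L`, then
`[γ_{c-1}(B), Lⁿ] ≤ γ_{c+1}(B)` (both sides viewed as subgroups of `E` via the inclusion
`B ≤ E`). -/
theorem lemma_3_5_Nc (c : ℕ) (hc : 2 ≤ c) {E : Type*} [Group E] (B : Subgroup E)
    (n : ℕ) (hn : n ≠ 0) (hidx : B.index = n)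
    (L : Subgroup E) (hL : L ≤ Subgroup.upperCentralSeries E c ⊓ (⊤ : Subgroup E).lowerCentralSeries c) :
    ⁅((⊤ : Subgroup ↥B).lowerCentralSeries (c - 2)).map B.subtype,
        Subgroup.closure ((fun g : E => g ^ n) '' (L : Set E))⁆ ≤
      ((⊤ : Subgroup ↥B).lowerCentralSeries c).map B.subtype := by
  classical
  haveI hFI : B.FiniteIndex := ⟨by rw [hidx]; exact hn⟩
  rw [Subgroup.commutator_le]
  rintro u hu v hv
  obtain ⟨u', hu', rfl⟩ := hu
  have huE : B.subtype u' ∈ (⊤ : Subgroup E).lowerCentralSeries (c - 2) :=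
    Subgroup.lowerCentralSeries_map_subtype_le B (c - 2) (Subgroup.mem_map.mpr ⟨u', hu', rfl⟩)
  have hSL : Subgroup.closure ((fun g : E => g ^ n) '' (L : Set E)) ≤ L := by
    rw [Subgroup.closure_le]
    rintro _ ⟨g, hg, rfl⟩
    exact L.pow_mem hg n
  induction hv using Subgroup.closure_induction with
  | one =>
    rw [commutatorElement_one_right]
    exact one_mem _
  | mul x y hx hy px py =>
    have hyZ : y ∈ Subgroup.upperCentralSeries E c := (hL (hSL hy)).1
    rw [comm_mul hc huE hyZ]
    exact mul_mem px py
  | inv x hx px =>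
    have hxZ : x ∈ Subgroup.upperCentralSeries E c := (hL (hSL hx)).1
    rw [comm_inv hc huE hxZ]
    exact inv_mem px
  | mem x hxS =>
    obtain ⟨g, hgL, rfl⟩ := hxS
    have hgZ : g ∈ Subgroup.upperCentralSeries E c := (hL hgL).1
    have hgl : g ∈ (⊤ : Subgroup E).lowerCentralSeries c := (hL hgL).2
    letI := B.fintypeQuotientOfFiniteIndex
    set φ : ↥B →* Abelianization ↥B := Abelianization.of with hφ
    have htr : MonoidHom.transfer φ g = 1 := by
      have hg' : g ∈ commutator E := by
        rw [← Subgroup.top_lowerCentralSeries_one]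
        exact Subgroup.lowerCentralSeries_antitone ⊤ (by omega : 1 ≤ c) hgl
      exact Abelianization.commutator_subset_ker (MonoidHom.transfer φ) hg'
    have hform := MonoidHom.transfer_eq_prod_quotient_orbitRel_zpowers_quot φ g
    rw [htr] at hform
    set Q := Quotient (orbitRel (Subgroup.zpowers g) (E ⧸ B)) with hQ
    set lfun : Q → ℕ := fun q => Function.minimalPeriod (g • ·) q.out with hlfun
    set bfun : Q → ↥B := fun q =>
      ⟨q.out.out⁻¹ * g ^ Function.minimalPeriod (g • ·) q.out * q.out.out,
        QuotientGroup.out_conj_pow_minimalPeriod_mem B g q.out⟩ with hbfun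
    have hform' : ∏ q : Q, φ (bfun q) = 1 := hform.symm
    have hsum : ∑ q : Q, lfun q = n := by
      have hidx' : B.index = ∑ q : Q, lfun q := by
        rw [Subgroup.index_eq_card, Nat.card_eq_fintype_card,
          Fintype.card_congr (MulAction.selfEquivSigmaOrbits (Subgroup.zpowers g) (E ⧸ B)),
          Fintype.card_sigma]
        exact Finset.sum_congr rfl fun q _ => (minimalPeriod_eq_card g q.out).symm
      rw [← hidx, hidx']
    set lst : List Q := Finset.univ.toList with hlst
    set β : ↥B := (lst.map bfun).prod with hβ
    have hofβ : φ β = 1 := by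
      rw [hβ, map_list_prod, List.map_map]
      rw [hlst, Finset.prod_map_toList]
      exact hform'
    have hβcomm : β ∈ commutator ↥B := (QuotientGroup.eq_one_iff β).mp hofβ
    have hβE : (β : E) = (lst.map fun q => ((bfun q : ↥B) : E)).prod := by
      rw [hβ]
      rw [Subgroup.val_list_prod, List.map_map]
      rfl
    have hbZ : ∀ q : Q, ((bfun q : ↥B) : E) ∈ Subgroup.upperCentralSeries E c := by
      intro q
      have h := (inferInstance : (Subgroup.upperCentralSeries E c).Normal).conj_mem _
        (pow_mem hgZ (Function.minimalPeriod (g • ·) q.out)) q.out.out⁻¹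
      simpa [hbfun, mul_assoc] using h
    have hcomm_b : ∀ q : Q, ⁅B.subtype u', ((bfun q : ↥B) : E)⁆ = ⁅B.subtype u', g⁆ ^ lfun q := by
      intro q
      have hval : ((bfun q : ↥B) : E) =
          q.out.out⁻¹ * g ^ Function.minimalPeriod (g • ·) q.out * q.out.out := rfl
      rw [hval, comm_conj hc q.out.out huE (pow_mem hgZ _), comm_pow hc huE hgZ]
    have h2 : ⁅B.subtype u', (β : E)⁆ = ⁅B.subtype u', g⁆ ^ n := by
      rw [hβE, comm_list_prod hc huE _ ?side, List.map_map]
      case side =>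
        intro z hz
        rcases List.mem_map.mp hz with ⟨q, _, rfl⟩
        exact hbZ q
      have hmaps : lst.map ((fun z => ⁅B.subtype u', z⁆) ∘ fun q => ((bfun q : ↥B) : E)) =
          lst.map fun q => ⁅B.subtype u', g⁆ ^ lfun q :=
        List.map_congr_left fun q _ => hcomm_b q
      rw [hmaps, prod_map_pow]
      rw [hlst, Finset.sum_map_toList, hsum]
    have h1 : ⁅B.subtype u', g ^ n⁆ = ⁅B.subtype u', g⁆ ^ n := comm_pow hc huE hgZ n
    rw [h1, ← h2]
    have hco : ⁅B.subtype u', (β : E)⁆ = B.subtype ⁅u', β⁆ :=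
      (map_commutatorElement B.subtype u' β).symm
    rw [hco]
    refine Subgroup.mem_map_of_mem _ ?_
    have hβ1 : β ∈ (⊤ : Subgroup ↥B).lowerCentralSeries 1 := by
      rw [Subgroup.top_lowerCentralSeries_one]; exact hβcomm
    have hfin := lcs_comm_lcs1 (G := ↥B) (c - 2)
      (Subgroup.commutator_mem_commutator hu' hβ1)
    have e : c - 2 + 2 = c := by omega
    rwa [e] at hfin
end

section
/- Let G be a finite group. Let G* be a group with a surjective homomorphism ψ: G* → G whose kernel L satisfies L ≤ γ₃(G*) ∩ Z₂(G*), and suppose L is isomorphic to the Baer-invariant 𝒩₂M(G). Let B be a subgroup of G* containing L, set H = ψ(B), and suppose H has index n in G. Let F₂ be a free group with a surjective homomorphism onto H having kernel R₂, and let e be the exponent of 𝒩₂M(H) = (R₂ ∩ γ₃(F₂)) / [[R₂,F₂],F₂]. Then the exponent of the subgroup [B, L] of G* divides n·e; that is, g^{n·e} = 1 for every g ∈ [B, L]. -/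
open scoped Pointwise
open scoped commutatorElement

section Helpers
variable {G : Type*} [Group G]

lemma conj_eq_self_of_center {w : G} (hw : w ∈ Subgroup.center G) (c : G) :
    c * w * c⁻¹ = w := by
  rw [Subgroup.mem_center_iff.mp hw c, mul_inv_cancel_right]

lemma comm_central_right (x y : G) {z : G} (hz : z ∈ Subgroup.center G) :
    ⁅x, y * z⁆ = ⁅x, y⁆ := by
  have h1 : ⁅x, y * z⁆ = ⁅x, y⁆ * (y * ⁅x, z⁆ * y⁻¹) := by group
  have h2 : ⁅x, z⁆ = 1 := commutatorElement_eq_one_iff_commute.mpr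
    (Subgroup.mem_center_iff.mp hz x)
  rw [h1, h2]; group

lemma comm_central_left (x y : G) {z : G} (hz : z ∈ Subgroup.center G) :
    ⁅x * z, y⁆ = ⁅x, y⁆ := by
  have h1 : ⁅x * z, y⁆ = (x * ⁅z, y⁆ * x⁻¹) * ⁅x, y⁆ := by group
  have h2 : ⁅z, y⁆ = 1 := commutatorElement_eq_one_iff_commute.mpr
    ((Subgroup.mem_center_iff.mp hz y).symm)
  rw [h1, h2]; group

lemma comm_mem_center_of_ucs2 {l : G} (hl : l ∈ upperCentralSeries G 2) (x : G) :
    ⁅x, l⁆ ∈ Subgroup.center G := by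
  have h := mem_upperCentralSeries_succ_iff.mp hl x
  rw [upperCentralSeries_one] at h
  have key : ⁅x, l⁆ = (l * x * l⁻¹ * x⁻¹)⁻¹ := by group
  rw [key]; exact inv_mem h

lemma comm_mul_left_of_ucs2 {y : G} (hy : y ∈ upperCentralSeries G 2) (a b : G) :
    ⁅a * b, y⁆ = ⁅a, y⁆ * ⁅b, y⁆ := by
  have h1 : ⁅a * b, y⁆ = (a * ⁅b, y⁆ * a⁻¹) * ⁅a, y⁆ := by group
  rw [h1, conj_eq_self_of_center (comm_mem_center_of_ucs2 hy b) a,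
    Subgroup.mem_center_iff.mp (comm_mem_center_of_ucs2 hy b) ⁅a, y⁆]

/-- Three-subgroups-style: elements of the commutator subgroup commute with `Z₂`. -/
lemma comm_eq_one_of_commutator_ucs2 {x y : G} (hx : x ∈ commutator G)
    (hy : y ∈ upperCentralSeries G 2) : ⁅x, y⁆ = 1 := by
  let ν : G →* Subgroup.center G :=
  { toFun := fun g => ⟨⁅g, y⁆, comm_mem_center_of_ucs2 hy g⟩
    map_one' := by ext; simp
    map_mul' := by
      intro a b
      ext
      exact comm_mul_left_of_ucs2 hy a b }
  have hker : commutator G ≤ ν.ker := by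
    rw [commutator_def, Subgroup.commutator_le]
    intro p _ q _
    rw [MonoidHom.mem_ker, map_commutatorElement]
    exact commutatorElement_eq_one_iff_commute.mpr
      (Subtype.ext (Subgroup.mem_center_iff.mp (ν q).2 (ν p)))
  have h1 : ν x = 1 := hker hx
  exact congrArg Subtype.val h1

lemma comm_pow_right {x y : G} (hy : y ∈ upperCentralSeries G 2) (k : ℕ) :
    ⁅x, y ^ k⁆ = ⁅x, y⁆ ^ k := by
  induction k with
  | zero => simp
  | succ k ih =>
    rw [pow_succ]
    have h1 : ⁅x, y ^ k * y⁆ = ⁅x, y ^ k⁆ * (y ^ k * ⁅x, y⁆ * (y ^ k)⁻¹) := by group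
    rw [h1, conj_eq_self_of_center (comm_mem_center_of_ucs2 hy x) (y ^ k), ih, ← pow_succ]

end Helpers

open scoped Pointwise

section Helpers
variable {G : Type*} [Group G]

lemma mk_center_of_ucs2 {x : G} (hx : x ∈ upperCentralSeries G 2) :
    (QuotientGroup.mk' (Subgroup.center G)) x ∈ Subgroup.center (G ⧸ Subgroup.center G) := by
  rw [Subgroup.mem_center_iff]
  intro q
  induction q using QuotientGroup.induction_on with
  | H g =>
    show ((g * x : G) : G ⧸ Subgroup.center G) = ((x * g : G) : G ⧸ Subgroup.center G)
    rw [QuotientGroup.eq]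
    have h1 : (g * x)⁻¹ * (x * g) = ⁅x⁻¹, g⁻¹⁆ := by group
    rw [h1, ← commutatorElement_inv]
    exact inv_mem (comm_mem_center_of_ucs2 (inv_mem hx) g⁻¹)

/-- The transfer step: if `l ∈ Z₂(G)` lies in the commutator subgroup and in `B`, then
`l ^ m ∈ [B,B]·Z(G)` where `m` is the index of the image of `B` in `G/Z(G)`. -/
lemma transfer_step (B : Subgroup G)
    (hm : (Subgroup.map (QuotientGroup.mk' (Subgroup.center G)) B).index ≠ 0)
    {l : G} (hl2 : l ∈ upperCentralSeries G 2) (hlc : l ∈ commutator G) :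
    l ^ (Subgroup.map (QuotientGroup.mk' (Subgroup.center G)) B).index ∈
      ⁅B, B⁆ ⊔ Subgroup.center G := by
  set Z1 := Subgroup.center G with hZ1
  set mkq : G →* G ⧸ Z1 := QuotientGroup.mk' Z1 with hmkq
  set Bbar := Subgroup.map mkq B with hBbar
  haveI : Bbar.FiniteIndex := ⟨hm⟩
  set A := Abelianization ↥Bbar
  set ϕ : ↥Bbar →* A := Abelianization.of with hϕ
  have hcen : mkq l ∈ Subgroup.center (G ⧸ Z1) := mk_center_of_ucs2 hl2
  have key : ∀ (k : ℕ) (g₀ : G ⧸ Z1), g₀⁻¹ * (mkq l) ^ k * g₀ ∈ Bbar →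
      g₀⁻¹ * (mkq l) ^ k * g₀ = (mkq l) ^ k := by
    intro k g₀ _
    have hc : (mkq l) ^ k ∈ Subgroup.center (G ⧸ Z1) := pow_mem hcen k
    have := conj_eq_self_of_center hc g₀⁻¹
    rwa [inv_inv] at this
  have h1 := MonoidHom.transfer_eq_pow ϕ (mkq l) key
  have h0 : MonoidHom.transfer ϕ (mkq l) = 1 := by
    have hlmem : mkq l ∈ commutator (G ⧸ Z1) := by
      have h2 : mkq l ∈ Subgroup.map mkq (commutator G) := Subgroup.mem_map_of_mem _ hlc
      rw [commutator_def, Subgroup.map_commutator] at h2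
      exact Subgroup.commutator_mono le_top le_top h2
    exact Abelianization.commutator_subset_ker (MonoidHom.transfer ϕ) hlmem
  rw [h0] at h1
  have h2 : (⟨(mkq l) ^ Bbar.index, MonoidHom.transfer_eq_pow_aux (mkq l) key⟩ : ↥Bbar) ∈
      commutator ↥Bbar := by
    have h3 : ϕ (⟨(mkq l) ^ Bbar.index, _⟩ : ↥Bbar) = 1 := h1.symm
    exact (QuotientGroup.eq_one_iff _).mp h3
  have h3 : (mkq l) ^ Bbar.index ∈ ⁅Bbar, Bbar⁆ := by
    have h4 := Subgroup.mem_map_of_mem Bbar.subtype h2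
    rw [commutator_def, Subgroup.map_commutator, ← MonoidHom.range_eq_map,
      Subgroup.range_subtype] at h4
    exact h4
  have h5 : mkq (l ^ Bbar.index) ∈ Subgroup.map mkq ⁅B, B⁆ := by
    rw [Subgroup.map_commutator, map_pow]
    exact h3
  have h6 : l ^ Bbar.index ∈ Subgroup.comap mkq (Subgroup.map mkq ⁅B, B⁆) := h5
  rwa [Subgroup.comap_map_eq, QuotientGroup.ker_mk'] at h6
end Helpers
/-- **Corollary 3.9 for the variety `𝒩₂`.**  With the setup of Theorem 3.6 (an
`𝒩₂`-stem cover `ψ : G* ↠ G` of the finite group `G` with kernel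
`L ≤ γ₃(G*) ∩ Z₂(G*)`, `L ≅ 𝒩₂M(G)`, and `L ≤ B ≤ G*` with `H = ψ(B)` of index `n` in
`G`), if `e` is the exponent of `𝒩₂M(H)` (computed from a free presentation
`π₂ : F₂ ↠ H`), then the exponent of `[B, L]` divides `n·e`; that is, `g^(n·e) = 1` for
every `g ∈ [B, L]`. -/
theorem corollary_3_9_N2 {G : Type*} [Group G] [Finite G]
    {Gs : Type*} [Group Gs] (ψ : Gs →* G) (hψ : Function.Surjective ψ)
    (hker : ψ.ker ≤ (⊤ : Subgroup Gs).lowerCentralSeries 2 ⊓ upperCentralSeries Gs 2)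
    {F₁ : Type*} [Group F₁] [IsFreeGroup F₁] (π₁ : F₁ →* G)
    (hπ₁ : Function.Surjective π₁)
    (hstem : Nonempty (↥ψ.ker ≃* ↥(baerInvariant 2 π₁.ker)))
    (B : Subgroup Gs) (hLB : ψ.ker ≤ B)
    (n : ℕ) (hn : (B.map ψ).index = n)
    {F₂ : Type*} [Group F₂] [IsFreeGroup F₂] (π₂ : F₂ →* ↥(B.map ψ))
    (hπ₂ : Function.Surjective π₂)
    (e : ℕ) (he : Monoid.exponent ↥(baerInvariant 2 π₂.ker) = e) :
    ∀ g ∈ ⁅B, ψ.ker⁆, g ^ (n * e) = 1 := by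
  classical
  -- a lift `σ : F₂ → Gs` of `π₂` through `ψ`, with image inside `B`
  obtain ⟨σ₀, hσ₀⟩ : ∃ σ₀ : F₂ →* ↥B, ∀ f, ψ ((σ₀ f : Gs)) = ((π₂ f : ↥(B.map ψ)) : G) := by
    have exists_pre : ∀ x : IsFreeGroup.Generators F₂,
        ∃ b : ↥B, ψ (b : Gs) = ((π₂ (IsFreeGroup.of x) : ↥(B.map ψ)) : G) := by
      intro x
      obtain ⟨g, hgB, hg⟩ := (π₂ (IsFreeGroup.of x)).2
      exact ⟨⟨g, hgB⟩, hg⟩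
    choose gm hgm using exists_pre
    refine ⟨IsFreeGroup.lift gm, ?_⟩
    intro f
    have hhom : (ψ.comp ((Subgroup.subtype B).comp (IsFreeGroup.lift gm))) =
        ((B.map ψ).subtype).comp π₂ := by
      apply IsFreeGroup.ext_hom
      intro a
      simp only [MonoidHom.comp_apply, IsFreeGroup.lift_of, Subgroup.coe_subtype]
      exact hgm a
    exact DFunLike.congr_fun hhom f
  set σ : F₂ →* Gs := (Subgroup.subtype B).comp σ₀ with hσdef
  have hσB : ∀ f, σ f ∈ B := fun f => (σ₀ f).2
  have hσψ : ∀ f, ψ (σ f) = ((π₂ f : ↥(B.map ψ)) : G) := hσ₀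
  have hσR : ∀ r ∈ π₂.ker, σ r ∈ ψ.ker := by
    intro r hr
    rw [MonoidHom.mem_ker] at hr ⊢
    rw [hσψ, hr, OneMemClass.coe_one]
  have hZ2 : ψ.ker ≤ upperCentralSeries Gs 2 := le_trans hker inf_le_right
  have hG2 : ψ.ker ≤ commutator Gs := by
    rw [← Subgroup.top_lowerCentralSeries_one]
    exact le_trans (le_trans hker inf_le_left) (Subgroup.lowerCentralSeries_antitone ⊤ one_le_two)
  set Z1 := Subgroup.center Gs with hZ1def
  set mkq : Gs →* Gs ⧸ Z1 := QuotientGroup.mk' Z1 with hmkqdef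
  -- decomposition of elements of B
  have hBdec : ∀ b ∈ B, ∃ a : F₂, ∃ l₀ ∈ ψ.ker, b = σ a * l₀ := by
    intro b hb
    obtain ⟨f, hf⟩ := hπ₂ ⟨ψ b, Subgroup.mem_map_of_mem ψ hb⟩
    refine ⟨f, (σ f)⁻¹ * b, ?_, by group⟩
    rw [MonoidHom.mem_ker, map_mul, map_inv, hσψ, hf]
    simp
  -- [B,B] ≤ σ([F₂,F₂]) · Z₁
  have hcommB : ⁅B, B⁆ ≤ (Subgroup.map σ (commutator F₂)) ⊔ Z1 := by
    rw [Subgroup.commutator_le]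
    intro b hb b' hb'
    obtain ⟨a, l₁, hl₁, rfl⟩ := hBdec b hb
    obtain ⟨a', l₂, hl₂, rfl⟩ := hBdec b' hb'
    have hζ : ⁅σ a * l₁, σ a' * l₂⁆ * (σ ⁅a, a'⁆)⁻¹ ∈ Z1 := by
      have hq : mkq (⁅σ a * l₁, σ a' * l₂⁆ * (σ ⁅a, a'⁆)⁻¹) = 1 := by
        rw [map_mul, map_inv, map_commutatorElement, map_mul, map_mul,
          comm_central_right _ _ (mk_center_of_ucs2 (hZ2 hl₂)),
          comm_central_left _ _ (mk_center_of_ucs2 (hZ2 hl₁)), ← map_commutatorElement,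
          ← map_commutatorElement]
        simp
        rw [← commutatorElement_inv (mkq (σ a)) (mkq (σ a')), mul_inv_cancel]
      have := MonoidHom.mem_ker.mpr hq
      rwa [QuotientGroup.ker_mk'] at this
    have hrw : ⁅σ a * l₁, σ a' * l₂⁆ =
        (⁅σ a * l₁, σ a' * l₂⁆ * (σ ⁅a, a'⁆)⁻¹) * σ ⁅a, a'⁆ := by group
    rw [hrw]
    exact Subgroup.mul_mem _ (Subgroup.mem_sup_right hζ)
      (Subgroup.mem_sup_left (Subgroup.mem_map_of_mem σ
        (Subgroup.commutator_mem_commutator (Subgroup.mem_top a) (Subgroup.mem_top a'))))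
  -- index bookkeeping
  have hBindex : B.index = n := by
    have h1 : Subgroup.comap ψ (Subgroup.map ψ B) = B := by
      rw [Subgroup.comap_map_eq, sup_eq_left.mpr hLB]
    rw [← h1, Subgroup.index_comap_of_surjective _ hψ, hn]
  set Bbar := Subgroup.map mkq B with hBbardef
  set m := Bbar.index with hmdef
  have hmdvd : m ∣ n := by
    have h3 : m = (B ⊔ Z1).index := by
      rw [hmdef, ← Subgroup.index_comap_of_surjective Bbar (QuotientGroup.mk'_surjective Z1),
        hBbardef, Subgroup.comap_map_eq, QuotientGroup.ker_mk']
    rw [h3, ← hBindex]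
    exact Subgroup.index_dvd_of_le le_sup_left
  have hnne : n ≠ 0 := by
    rw [← hn]
    exact Subgroup.index_ne_zero_of_finite
  have hmne : m ≠ 0 := by
    intro h
    rw [h] at hmdvd
    exact hnne (zero_dvd_iff.mp hmdvd)
  -- the main per-generator computation
  have hgen : ∀ b ∈ B, ∀ l ∈ ψ.ker, ⁅b, l⁆ ^ (n * e) = 1 := by
    intro b hb l hl
    obtain ⟨k, hk⟩ := hmdvd
    have htr := transfer_step B hmne (hZ2 hl) (hG2 hl)
    rw [← hmdef] at htr
    -- l ^ m = u * z with u ∈ [B,B], z central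
    have htr' : l ^ m ∈ ((⁅B, B⁆ : Subgroup Gs) : Set Gs) * (Z1 : Set Gs) := by
      rw [← Subgroup.mul_normal]
      exact_mod_cast htr
    obtain ⟨u, hu, z, hz, huz⟩ := htr'
    -- u = σ w * z₁ with w ∈ [F₂,F₂], z₁ central
    have husup : u ∈ ((Subgroup.map σ (commutator F₂)) : Set Gs) * (Z1 : Set Gs) := by
      rw [← Subgroup.mul_normal]
      exact_mod_cast hcommB hu
    obtain ⟨v, hv, z₁, hz₁, hvz⟩ := husup
    obtain ⟨w, hw, rfl⟩ := hv
    -- σ w = l ^ m * z₂ with z₂ central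
    have hσw : σ w = l ^ m * (z⁻¹ * z₁⁻¹) := by
      rw [← huz, ← hvz]; group
    have hz₂ : z⁻¹ * z₁⁻¹ ∈ Z1 := mul_mem (inv_mem hz) (inv_mem hz₁)
    have hσwZ2 : σ w ∈ upperCentralSeries Gs 2 := by
      rw [hσw]
      refine mul_mem (pow_mem (hZ2 hl) m) ?_
      have hZ12 : Z1 ≤ upperCentralSeries Gs 2 := by
        rw [hZ1def, ← upperCentralSeries_one]
        exact upperCentralSeries_mono Gs one_le_two
      exact hZ12 hz₂
    obtain ⟨a, l₀, hl₀, hbdec⟩ := hBdec b hb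
    -- the key exact computation ⁅b, u⁆ = σ ⁅a, w⁆
    have hcomm_bu : ⁅b, u⁆ = σ ⁅a, w⁆ := by
      have e1 : ⁅b, u⁆ = ⁅b, σ w⁆ := by rw [← hvz, comm_central_right _ _ hz₁]
      have e2 : ⁅b, σ w⁆ = ⁅σ a, σ w⁆ := by
        rw [hbdec, comm_mul_left_of_ucs2 hσwZ2,
          comm_eq_one_of_commutator_ucs2 (hG2 hl₀) hσwZ2, mul_one]
      rw [e1, e2, map_commutatorElement]
    -- ⁅a, w⁆ lies in R₂ ∩ γ₃(F₂)
    have hawlcs : ⁅a, w⁆ ∈ (⊤ : Subgroup F₂).lowerCentralSeries 2 := by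
      have h1 : ⁅w, a⁆ ∈ (⊤ : Subgroup F₂).lowerCentralSeries 2 := by
        show ⁅w, a⁆ ∈ ⁅(⊤ : Subgroup F₂).lowerCentralSeries 1, ⊤⁆
        exact Subgroup.commutator_mem_commutator
          (by rwa [Subgroup.top_lowerCentralSeries_one]) (Subgroup.mem_top a)
      have h2 : ⁅a, w⁆ = ⁅w, a⁆⁻¹ := (commutatorElement_inv w a).symm
      rw [h2]
      exact inv_mem h1
    have hψz : ψ z ∈ Subgroup.center G := by
      rw [Subgroup.mem_center_iff]
      intro g
      obtain ⟨g', rfl⟩ := hψ g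
      rw [← map_mul, Subgroup.mem_center_iff.mp hz g', map_mul]
    have hueq : u = l ^ m * z⁻¹ := by rw [← huz]; group
    have hψu : ψ u ∈ Subgroup.center G := by
      have : ψ u = (ψ z)⁻¹ := by
        rw [hueq, map_mul, map_pow, MonoidHom.mem_ker.mp hl, one_pow, one_mul, map_inv]
      rw [this]
      exact inv_mem hψz
    have hψσaw : ψ (σ ⁅a, w⁆) = 1 := by
      rw [← hcomm_bu, map_commutatorElement]
      exact commutatorElement_eq_one_iff_commute.mpr
        (Subgroup.mem_center_iff.mp hψu (ψ b))
    have hawker : ⁅a, w⁆ ∈ π₂.ker := by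
      rw [MonoidHom.mem_ker]
      have h2 : ((π₂ ⁅a, w⁆ : ↥(B.map ψ)) : G) = 1 := by rw [← hσψ]; exact hψσaw
      exact Subtype.ext (by simpa using h2)
    -- the Baer invariant has exponent dividing e
    have hclass : (QuotientGroup.mk' (iteratedCommutator π₂.ker 2)) ⁅a, w⁆ ∈
        baerInvariant 2 π₂.ker :=
      Subgroup.mem_map_of_mem _ (Subgroup.mem_inf.mpr ⟨hawker, hawlcs⟩)
    have hawe : ⁅a, w⁆ ^ e ∈ iteratedCommutator π₂.ker 2 := by
      have h4 := Monoid.pow_exponent_eq_one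
        (⟨_, hclass⟩ : ↥(baerInvariant 2 π₂.ker))
      rw [he] at h4
      have h5 : ((QuotientGroup.mk' (iteratedCommutator π₂.ker 2)) ⁅a, w⁆) ^ e = 1 := by
        simpa using congrArg Subtype.val h4
      rw [← map_pow] at h5
      exact (QuotientGroup.eq_one_iff _).mp h5
    -- σ kills iteratedCommutator π₂.ker 2
    have hσN : σ (⁅a, w⁆ ^ e) = 1 := by
      have hmem : σ (⁅a, w⁆ ^ e) ∈ Subgroup.map σ (iteratedCommutator π₂.ker 2) :=
        Subgroup.mem_map_of_mem _ hawe
      have hle : Subgroup.map σ (iteratedCommutator π₂.ker 2) ≤ ⊥ := by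
        have h2 : iteratedCommutator π₂.ker 2 = ⁅⁅π₂.ker, ⊤⁆, ⊤⁆ := rfl
        rw [h2, Subgroup.map_commutator, Subgroup.map_commutator]
        have step1 : ⁅Subgroup.map σ π₂.ker, Subgroup.map σ (⊤ : Subgroup F₂)⁆ ≤ Z1 := by
          rw [Subgroup.commutator_le]
          rintro x ⟨r, hr, rfl⟩ y _
          have hxZ2 : σ r ∈ upperCentralSeries Gs 2 := hZ2 (hσR r hr)
          have : ⁅σ r, y⁆ = ⁅y, σ r⁆⁻¹ := (commutatorElement_inv y (σ r)).symm
          rw [this]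
          exact inv_mem (comm_mem_center_of_ucs2 hxZ2 y)
        have step2 : ⁅Z1, Subgroup.map σ (⊤ : Subgroup F₂)⁆ ≤ ⊥ := by
          rw [Subgroup.commutator_le]
          intro zc hzc y _
          rw [Subgroup.mem_bot]
          exact commutatorElement_eq_one_iff_commute.mpr
            ((Subgroup.mem_center_iff.mp hzc y).symm)
        exact le_trans (Subgroup.commutator_mono step1 le_rfl) step2
      have := hle hmem
      rwa [Subgroup.mem_bot] at this
    have hbue : ⁅b, u⁆ ^ e = 1 := by rw [hcomm_bu, ← map_pow, hσN]
    have hblm : ⁅b, l⁆ ^ m = ⁅b, u⁆ := by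
      rw [← comm_pow_right (hZ2 hl) m, ← huz, comm_central_right _ _ hz]
    have hme : ⁅b, l⁆ ^ (m * e) = 1 := by rw [pow_mul, hblm, hbue]
    calc ⁅b, l⁆ ^ (n * e) = (⁅b, l⁆ ^ (m * e)) ^ k := by
          rw [← pow_mul]
          congr 1
          rw [hk]
          ring
      _ = 1 := by rw [hme, one_pow]
  -- conclude for the whole commutator subgroup
  intro g hg
  let K : Subgroup Gs :=
  { carrier := {x | x ∈ Subgroup.center Gs ∧ x ^ (n * e) = 1}
    one_mem' := ⟨one_mem _, one_pow _⟩
    mul_mem' := by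
      rintro x y ⟨hx1, hx2⟩ ⟨hy1, hy2⟩
      refine ⟨mul_mem hx1 hy1, ?_⟩
      rw [(Commute.mul_pow (Subgroup.mem_center_iff.mp hx1 y).symm), hx2, hy2, one_mul]
    inv_mem' := by
      rintro x ⟨h1, h2⟩
      exact ⟨inv_mem h1, by rw [inv_pow, h2, inv_one]⟩ }
  have hle : ⁅B, ψ.ker⁆ ≤ K := by
    rw [Subgroup.commutator_le]
    intro b hb l hl
    exact ⟨comm_mem_center_of_ucs2 (hZ2 hl) b, hgen b hb l hl⟩
  exact (hle hg).2
end

section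
/- Let F be the free group on two generators x, y and let R be the normal closure in F of {x², y³, xyxy} (so that F/R ≅ S₃). Then: (i) [y,x,y] ∈ R, and moreover [y,x,y] ∈ [R,F] and [y,x,x,y] ∈ [R,F]; (ii) for every nonempty finite sequence a₁, …, a_n of elements of F, the left-normed commutator [y,x,y,a₁,…,a_n] lies in [[R,F],F]; (iii) for every nonempty finite sequence b₁, …, b_m of elements of F, the left-normed commutator [y,x,x,y,b₁,…,b_m] lies in [[R,F],F]. -/
/-- The free group `F` on the two generators `x`, `y`. -/
abbrev FS3 : Type := FreeGroup Bool

/-- The free generator `x` of `F`. -/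
def xF : FS3 := FreeGroup.of true

/-- The free generator `y` of `F`. -/
def yF : FS3 := FreeGroup.of false

/-- `R` is the normal closure in `F` of `{x², y³, xyxy}`, so that `F/R ≅ S₃`. -/
def RS3 : Subgroup FS3 := Subgroup.normalClosure {xF ^ 2, yF ^ 3, xF * yF * xF * yF}

instance RS3_normal : RS3.Normal := Subgroup.normalClosure_normal

open scoped commutatorElement

lemma pcomm_eq_commutator {G : Type*} [Group G] (a b : G) :
    pcomm a b = ⁅a⁻¹, b⁻¹⁆ := by
  simp only [pcomm, commutatorElement_def]
  group

lemma pcomm_mem_commutator {G : Type*} [Group G] {H : Subgroup G} {a : G}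
    (ha : a ∈ H) (b : G) : pcomm a b ∈ ⁅H, (⊤ : Subgroup G)⁆ := by
  rw [pcomm_eq_commutator]
  exact Subgroup.commutator_mem_commutator (inv_mem ha) (Subgroup.mem_top _)

lemma pcomm_mem_of_normal {G : Type*} [Group G] {N : Subgroup G} [hN : N.Normal]
    {a : G} (ha : a ∈ N) (b : G) : pcomm a b ∈ N := by
  have h2 : b⁻¹ * a * b ∈ N := by
    have := hN.conj_mem a ha b⁻¹
    simpa using this
  have h3 : a⁻¹ * (b⁻¹ * a * b) ∈ N := mul_mem (inv_mem ha) h2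
  have : pcomm a b = a⁻¹ * (b⁻¹ * a * b) := by simp only [pcomm]; group
  rwa [this]

lemma foldl_pcomm_mem {G : Type*} [Group G] {N : Subgroup G} [N.Normal] :
    ∀ (l : List G) {w : G}, w ∈ N → l.foldl pcomm w ∈ N
  | [], _, hw => hw
  | a :: t, _, hw => foldl_pcomm_mem t (pcomm_mem_of_normal hw a)

lemma pcomm_central_mul {G : Type*} [Group G] {z : G} (hz : ∀ g, Commute z g)
    (a b : G) : pcomm (z * a) b = pcomm a b := by
  have h : z⁻¹ * b⁻¹ * z = b⁻¹ := by
    rw [((hz b⁻¹).inv_left).eq]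
    group
  calc pcomm (z * a) b = a⁻¹ * (z⁻¹ * b⁻¹ * z) * a * b := by
        simp only [pcomm]; group
    _ = pcomm a b := by rw [h]; simp only [pcomm]

lemma pcomm_self {G : Type*} [Group G] (a : G) : pcomm a a = 1 := by
  simp only [pcomm]; group

lemma key_comm {G : Type*} [Group G] {X Y : G}
    (h1 : ∀ g, Commute (X ^ 2) g) (h3 : ∀ g, Commute (X * Y * X * Y) g) :
    pcomm Y X = (Y ^ 3)⁻¹ * (X ^ 2)⁻¹ * (X * Y * X * Y) * Y := by
  have e1 : (X * Y * X * Y) * Y⁻¹ = Y⁻¹ * (X * Y * X * Y) := (h3 Y⁻¹).eq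
  have e2 : (X ^ 2)⁻¹ * Y⁻¹ = Y⁻¹ * (X ^ 2)⁻¹ := ((h1 Y⁻¹).inv_left).eq
  have e3 : (X * Y * X * Y) * Y = Y * (X * Y * X * Y) := (h3 Y).eq
  have e4 : (X ^ 2)⁻¹ * Y = Y * (X ^ 2)⁻¹ := ((h1 Y).inv_left).eq
  have lhs : pcomm Y X = Y⁻¹ * Y⁻¹ * (X ^ 2)⁻¹ * (X * Y * X * Y) := by
    calc pcomm Y X = Y⁻¹ * (X ^ 2)⁻¹ * ((X * Y * X * Y) * Y⁻¹) := by
          simp only [pcomm]; group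
      _ = Y⁻¹ * ((X ^ 2)⁻¹ * Y⁻¹) * (X * Y * X * Y) := by rw [e1]; group
      _ = Y⁻¹ * (Y⁻¹ * (X ^ 2)⁻¹) * (X * Y * X * Y) := by rw [e2]
      _ = Y⁻¹ * Y⁻¹ * (X ^ 2)⁻¹ * (X * Y * X * Y) := by group
  have rhs : (Y ^ 3)⁻¹ * (X ^ 2)⁻¹ * (X * Y * X * Y) * Y
      = Y⁻¹ * Y⁻¹ * (X ^ 2)⁻¹ * (X * Y * X * Y) := by
    calc (Y ^ 3)⁻¹ * (X ^ 2)⁻¹ * (X * Y * X * Y) * Y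
        = (Y ^ 3)⁻¹ * ((X ^ 2)⁻¹ * ((X * Y * X * Y) * Y)) := by group
      _ = (Y ^ 3)⁻¹ * (((X ^ 2)⁻¹ * Y) * (X * Y * X * Y)) := by rw [e3]; group
      _ = (Y ^ 3)⁻¹ * ((Y * (X ^ 2)⁻¹) * (X * Y * X * Y)) := by rw [e4]
      _ = Y⁻¹ * Y⁻¹ * (X ^ 2)⁻¹ * (X * Y * X * Y) := by group
  rw [lhs, rhs]

/-- **Lemma 5.1.**  With `F` free on `x, y` and `R` the normal closure of
`{x², y³, xyxy}` (so `F/R ≅ S₃`):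
(i) `[y,x,y] ∈ R`, and moreover `[y,x,y] ∈ [R,F]` and `[y,x,x,y] ∈ [R,F]`;
(ii) `[y,x,y,a₁,…,a_n] ∈ [[R,F],F]` for every nonempty sequence `a₁, …, a_n` in `F`;
(iii) `[y,x,x,y,b₁,…,b_m] ∈ [[R,F],F]` for every nonempty sequence `b₁, …, b_m` in `F`. -/
theorem lemma_5_1 :
    pcomm (pcomm yF xF) yF ∈ RS3 ∧
    pcomm (pcomm yF xF) yF ∈ ⁅RS3, (⊤ : Subgroup FS3)⁆ ∧
    pcomm (pcomm (pcomm yF xF) xF) yF ∈ ⁅RS3, (⊤ : Subgroup FS3)⁆ ∧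
    (∀ l : List FS3, l ≠ [] →
      l.foldl pcomm (pcomm (pcomm yF xF) yF) ∈
        ⁅⁅RS3, (⊤ : Subgroup FS3)⁆, (⊤ : Subgroup FS3)⁆) ∧
    (∀ l : List FS3, l ≠ [] →
      l.foldl pcomm (pcomm (pcomm (pcomm yF xF) xF) yF) ∈
        ⁅⁅RS3, (⊤ : Subgroup FS3)⁆, (⊤ : Subgroup FS3)⁆) := by
  set N : Subgroup FS3 := ⁅RS3, (⊤ : Subgroup FS3)⁆ with hNdef
  haveI : N.Normal := Subgroup.commutator_normal RS3 ⊤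
  let π : FS3 →* FS3 ⧸ N := QuotientGroup.mk' N
  have hker : ∀ w : FS3, w ∈ N → π w = 1 := fun w hw =>
    (QuotientGroup.eq_one_iff w).mpr hw
  have hmem : ∀ w : FS3, π w = 1 → w ∈ N := fun w hw =>
    (QuotientGroup.eq_one_iff w).mp hw
  have hcen : ∀ r ∈ RS3, ∀ q : FS3 ⧸ N, Commute (π r) q := by
    intro r hr q
    obtain ⟨g, rfl⟩ := QuotientGroup.mk'_surjective N q
    rw [← commutatorElement_eq_one_iff_commute, ← map_commutatorElement]
    exact hker _ (Subgroup.commutator_mem_commutator hr (Subgroup.mem_top _))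
  set X : FS3 ⧸ N := π xF with hX
  set Y : FS3 ⧸ N := π yF with hY
  have hx2 : xF ^ 2 ∈ RS3 := Subgroup.subset_normalClosure (by left; rfl)
  have hy3 : yF ^ 3 ∈ RS3 := Subgroup.subset_normalClosure (by right; left; rfl)
  have hxyxy : xF * yF * xF * yF ∈ RS3 :=
    Subgroup.subset_normalClosure (by right; right; rfl)
  have h1 : ∀ q, Commute (X ^ 2) q := by
    intro q; have := hcen _ hx2 q; rwa [map_pow] at this
  have h2 : ∀ q, Commute (Y ^ 3) q := by
    intro q; have := hcen _ hy3 q; rwa [map_pow] at this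
  have h3 : ∀ q, Commute (X * Y * X * Y) q := by
    intro q; have := hcen _ hxyxy q; rwa [map_mul, map_mul, map_mul] at this
  have hz : ∀ q, Commute ((Y ^ 3)⁻¹ * (X ^ 2)⁻¹ * (X * Y * X * Y)) q := fun q =>
    (((h2 q).inv_left).mul_left ((h1 q).inv_left)).mul_left (h3 q)
  have key : pcomm Y X = (Y ^ 3)⁻¹ * (X ^ 2)⁻¹ * (X * Y * X * Y) * Y :=
    key_comm h1 h3
  have map_pcomm : ∀ a b : FS3, π (pcomm a b) = pcomm (π a) (π b) := by
    intro a b; simp only [pcomm, map_mul, map_inv]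
  have hq1 : π (pcomm (pcomm yF xF) yF) = 1 := by
    rw [map_pcomm, map_pcomm, ← hX, ← hY, key,
      pcomm_central_mul hz, pcomm_self]
  have hq2 : π (pcomm (pcomm (pcomm yF xF) xF) yF) = 1 := by
    rw [map_pcomm, map_pcomm, map_pcomm, ← hX, ← hY, key,
      pcomm_central_mul hz, key,
      pcomm_central_mul hz, pcomm_self]
  have m1 : pcomm (pcomm yF xF) yF ∈ N := hmem _ hq1
  have m2 : pcomm (pcomm (pcomm yF xF) xF) yF ∈ N := hmem _ hq2
  haveI : Subgroup.Normal ⁅N, (⊤ : Subgroup FS3)⁆ := Subgroup.commutator_normal N ⊤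
  refine ⟨Subgroup.commutator_le_left RS3 ⊤ m1, m1, m2, ?_, ?_⟩
  · rintro (_ | ⟨a, t⟩) hl
    · exact absurd rfl hl
    · exact foldl_pcomm_mem t (pcomm_mem_commutator m1 a)
  · rintro (_ | ⟨b, t⟩) hl
    · exact absurd rfl hl
    · exact foldl_pcomm_mem t (pcomm_mem_commutator m2 b)
end

section
/- Let F be the free group on two generators x, y and let R be the normal closure in F of {x², y³, xyxy} (so that F/R ≅ S₃). Then [y,x,y] ∈ [[R,F],F], [x,y,x,y] ∈ [[R,F],F], and [y,x,x,y] ∈ [[R,F],F]. -/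
section helpers
variable {G : Type*} [Group G]
lemma pcomm_swap (a b : G) : pcomm b a = (pcomm a b)⁻¹ := by simp only [pcomm]; group
lemma pcomm_mul_left (a b c : G) :
    pcomm (a * b) c = b⁻¹ * pcomm a c * b * pcomm b c := by simp only [pcomm]; group
lemma pcomm_mul_right (a b c : G) :
    pcomm a (b * c) = pcomm a c * (c⁻¹ * pcomm a b * c) := by simp only [pcomm]; group
lemma conj_eq_of_central {k : G} (h : ∀ u, k * u = u * k) (w : G) :
    w⁻¹ * k * w = k := by rw [mul_assoc, h w, ← mul_assoc, inv_mul_cancel, one_mul]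
lemma pcomm_central_one {k : G} (h : ∀ u, k * u = u * k) (g : G) :
    pcomm k g = 1 := by simp only [pcomm]; rw [mul_assoc, h g]; group
lemma mul_comm_of_pcomm_eq_one {a b : G} (h : pcomm a b = 1) : a * b = b * a := by
  have h2 : b * a * pcomm a b = b * a := by rw [h, mul_one]
  simpa [pcomm, mul_assoc] using h2
lemma pcomm_mul_left_c {a c : G} (b : G) (h : ∀ u, pcomm a c * u = u * pcomm a c) :
    pcomm (a * b) c = pcomm a c * pcomm b c := by
  rw [pcomm_mul_left, conj_eq_of_central h]
lemma pcomm_mul_right_c {a b : G} (c : G) (h : ∀ u, pcomm a b * u = u * pcomm a b) :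
    pcomm a (b * c) = pcomm a b * pcomm a c := by
  rw [pcomm_mul_right, conj_eq_of_central h]; exact (h (pcomm a c)).symm
lemma pcomm_one_left (c : G) : pcomm 1 c = 1 := by simp [pcomm]
lemma pcomm_inv_left_c {a c : G} (h : ∀ u, pcomm a c * u = u * pcomm a c) :
    pcomm a⁻¹ c = (pcomm a c)⁻¹ := by
  have h1 : pcomm (a * a⁻¹) c = pcomm a c * pcomm a⁻¹ c := pcomm_mul_left_c a⁻¹ h
  rw [mul_inv_cancel, pcomm_one_left] at h1
  exact eq_inv_of_mul_eq_one_right h1.symm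
lemma pcomm_conj_left_c {a : G} (w c : G) (hA : ∀ g u, pcomm a g * u = u * pcomm a g) :
    pcomm (w⁻¹ * a * w) c = pcomm a c := by
  have h1 : w⁻¹ * a * w = a * pcomm a w := by simp only [pcomm]; group
  rw [h1, pcomm_mul_left_c _ (hA c), pcomm_central_one (hA w) c, mul_one]
lemma pcomm_mul_self (a b : G) : pcomm (b * a) b = pcomm a b := by simp only [pcomm]; group
lemma pcomm_inv_first (a b : G) : pcomm b⁻¹ a = b * (pcomm b a)⁻¹ * b⁻¹ := by
  simp only [pcomm]; group
lemma conj_eq_mul_pcomm (a w : G) : w⁻¹ * a * w = a * pcomm a w := by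
  simp only [pcomm]; group
lemma central_inv {k : G} (h : ∀ u, k * u = u * k) : ∀ u, k⁻¹ * u = u * k⁻¹ := by
  intro u
  have h2 := congrArg (fun z => k⁻¹ * z * k⁻¹) (h u)
  simpa [mul_assoc] using h2.symm
lemma central_mul {k l : G} (hk : ∀ u, k * u = u * k) (hl : ∀ u, l * u = u * l) :
    ∀ u, (k * l) * u = u * (k * l) := by
  intro u; rw [mul_assoc, hl u, ← mul_assoc, hk u, mul_assoc]
end helpers

instance : RS3.Normal := Subgroup.normalClosure_normal
def DS3 : Subgroup FS3 := ⁅⁅RS3, (⊤ : Subgroup FS3)⁆, (⊤ : Subgroup FS3)⁆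
instance : DS3.Normal := Subgroup.commutator_normal ⁅RS3, (⊤ : Subgroup FS3)⁆ ⊤
abbrev QS3 : Type := FS3 ⧸ DS3
def XQ : QS3 := QuotientGroup.mk xF
def YQ : QS3 := QuotientGroup.mk yF
def inR (ρ : QS3) : Prop := ∃ r ∈ RS3, (QuotientGroup.mk r : QS3) = ρ

open scoped commutatorElement in
lemma inR.cen {ρ : QS3} (h : inR ρ) (g u : QS3) :
    pcomm ρ g * u = u * pcomm ρ g := by
  obtain ⟨r, hr, rfl⟩ := h
  obtain ⟨f, rfl⟩ := QuotientGroup.mk_surjective g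
  obtain ⟨v, rfl⟩ := QuotientGroup.mk_surjective u
  have hmem : pcomm (pcomm r f) v ∈ DS3 := by
    have h1 : pcomm r f ∈ ⁅RS3, (⊤ : Subgroup FS3)⁆ := by
      have e : pcomm r f = ⁅r⁻¹, f⁻¹⁆ := by simp only [pcomm, commutatorElement_def, inv_inv]
      rw [e]; exact Subgroup.commutator_mem_commutator (inv_mem hr) (Subgroup.mem_top _)
    have e2 : pcomm (pcomm r f) v = ⁅(pcomm r f)⁻¹, v⁻¹⁆ := by
      simp only [pcomm, commutatorElement_def, inv_inv]
    rw [e2]; exact Subgroup.commutator_mem_commutator (inv_mem h1) (Subgroup.mem_top _)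
  have h1 : (QuotientGroup.mk (pcomm (pcomm r f) v) : QS3) = 1 :=
    (QuotientGroup.eq_one_iff _).mpr hmem
  have h2 : pcomm (pcomm (QuotientGroup.mk r : QS3) (QuotientGroup.mk f))
      (QuotientGroup.mk v) = 1 := by simpa [pcomm] using h1
  exact mul_comm_of_pcomm_eq_one h2

lemma inR_mul {ρ σ : QS3} (h1 : inR ρ) (h2 : inR σ) : inR (ρ * σ) := by
  obtain ⟨r, hr, rfl⟩ := h1; obtain ⟨s, hs, rfl⟩ := h2
  exact ⟨r * s, mul_mem hr hs, by simp⟩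
lemma inR_inv {ρ : QS3} (h : inR ρ) : inR ρ⁻¹ := by
  obtain ⟨r, hr, rfl⟩ := h; exact ⟨r⁻¹, inv_mem hr, by simp⟩
lemma inR_conj {ρ : QS3} (h : inR ρ) (w : QS3) : inR (w * ρ * w⁻¹) := by
  obtain ⟨r, hr, rfl⟩ := h
  obtain ⟨f, rfl⟩ := QuotientGroup.mk_surjective w
  exact ⟨f * r * f⁻¹, Subgroup.Normal.conj_mem inferInstance r hr f, by simp⟩

def R1 : QS3 := XQ * XQ
def R2 : QS3 := YQ * YQ * YQ
def R3 : QS3 := XQ * YQ * XQ * YQ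
def qQ : QS3 := R2⁻¹ * R1⁻¹ * R3
def rQ : QS3 := YQ * qQ * YQ⁻¹

lemma inR_R1 : inR R1 :=
  ⟨xF ^ 2, Subgroup.subset_normalClosure (Set.mem_insert _ _), by rw [pow_two]; rfl⟩
lemma inR_R2 : inR R2 :=
  ⟨yF ^ 3, Subgroup.subset_normalClosure (Set.mem_insert_of_mem _ (Set.mem_insert _ _)),
    by rw [pow_succ, pow_two]; rfl⟩
lemma inR_R3 : inR R3 :=
  ⟨xF * yF * xF * yF,
    Subgroup.subset_normalClosure (Set.mem_insert_of_mem _ (Set.mem_insert_of_mem _ rfl)), rfl⟩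
lemma inR_pre : inR (R2⁻¹ * R1⁻¹) := inR_mul (inR_inv inR_R2) (inR_inv inR_R1)
lemma inR_q : inR qQ := inR_mul inR_pre inR_R3
lemma inR_r : inR rQ := inR_conj inR_q YQ
lemma inR_rinv : inR rQ⁻¹ := inR_inv inR_r
lemma inR_rdot : inR (YQ * rQ⁻¹ * YQ⁻¹) := inR_conj inR_rinv YQ

-- expansion lemmas
lemma expand1 (a : QS3) (h : ∀ g u, pcomm a g * u = u * pcomm a g) :
    pcomm a R1 = pcomm a XQ * pcomm a XQ := by
  simp only [R1]; rw [pcomm_mul_right_c XQ (h XQ)]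
lemma expand2 (a : QS3) (h : ∀ g u, pcomm a g * u = u * pcomm a g) :
    pcomm a R2 = pcomm a YQ * pcomm a YQ * pcomm a YQ := by
  simp only [R2]; rw [pcomm_mul_right_c YQ (h _), pcomm_mul_right_c YQ (h _)]
lemma expand3 (a : QS3) (h : ∀ g u, pcomm a g * u = u * pcomm a g) :
    pcomm a R3 = pcomm a XQ * pcomm a YQ * pcomm a XQ * pcomm a YQ := by
  simp only [R3]
  rw [pcomm_mul_right_c YQ (h _), pcomm_mul_right_c XQ (h _), pcomm_mul_right_c YQ (h _)]

lemma hA1 : pcomm R1 XQ = 1 := by simp only [R1, pcomm]; group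
lemma hB2 : pcomm R2 YQ = 1 := by simp only [R2, pcomm]; group
lemma hA3B3 : pcomm R3 XQ * pcomm R3 YQ = 1 := by
  rw [← pcomm_mul_right_c YQ (inR_R3.cen XQ)]
  simp only [R3, pcomm]; group

lemma hsq : pcomm R3 YQ * pcomm R3 YQ = pcomm R1 YQ * pcomm R1 YQ := by
  have e13 : pcomm R1 R3 = pcomm R1 YQ * pcomm R1 YQ := by
    rw [expand3 R1 inR_R1.cen, hA1, one_mul, mul_one]
  have e31 : pcomm R3 R1 = pcomm R3 XQ * pcomm R3 XQ := expand1 R3 inR_R3.cen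
  have hswap : pcomm R3 R1 = (pcomm R1 R3)⁻¹ := pcomm_swap R1 R3
  have ha3 : pcomm R3 XQ = (pcomm R3 YQ)⁻¹ := eq_inv_of_mul_eq_one_left hA3B3
  have key : (pcomm R3 YQ)⁻¹ * (pcomm R3 YQ)⁻¹ = (pcomm R1 YQ * pcomm R1 YQ)⁻¹ := by
    rw [← ha3, ← e31, hswap, e13]
  have h2 := congrArg Inv.inv key
  simpa [mul_inv_rev] using h2

lemma hcube : pcomm R3 YQ * pcomm R3 YQ * pcomm R3 YQ
    = pcomm R1 YQ * pcomm R1 YQ * pcomm R1 YQ := by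
  have e12 : pcomm R1 R2 = pcomm R1 YQ * pcomm R1 YQ * pcomm R1 YQ :=
    expand2 R1 inR_R1.cen
  have e21 : pcomm R2 R1 = pcomm R2 XQ * pcomm R2 XQ := expand1 R2 inR_R2.cen
  have e32 : pcomm R3 R2 = pcomm R3 YQ * pcomm R3 YQ * pcomm R3 YQ :=
    expand2 R3 inR_R3.cen
  have e23 : pcomm R2 R3 = pcomm R2 XQ * pcomm R2 XQ := by
    rw [expand3 R2 inR_R2.cen, hB2, mul_one, mul_one]
  calc pcomm R3 YQ * pcomm R3 YQ * pcomm R3 YQ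
      = pcomm R3 R2 := e32.symm
    _ = (pcomm R2 R3)⁻¹ := pcomm_swap R2 R3
    _ = (pcomm R2 R1)⁻¹ := by rw [e23, e21]
    _ = pcomm R1 R2 := by rw [pcomm_swap R1 R2, inv_inv]
    _ = pcomm R1 YQ * pcomm R1 YQ * pcomm R1 YQ := e12

lemma B3_eq_B1 : pcomm R3 YQ = pcomm R1 YQ := by
  have h2 : pcomm R3 YQ * (pcomm R3 YQ * pcomm R3 YQ)
      = pcomm R1 YQ * (pcomm R1 YQ * pcomm R1 YQ) := by
    rw [← mul_assoc, ← mul_assoc]; exact hcube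
  rw [hsq] at h2
  exact mul_right_cancel h2

lemma key1 : pcomm rQ YQ = 1 := by
  have h1 : rQ = (YQ⁻¹)⁻¹ * qQ * YQ⁻¹ := by simp only [rQ, inv_inv]
  rw [h1, pcomm_conj_left_c _ _ inR_q.cen]
  have e : pcomm qQ YQ = pcomm (R2⁻¹ * R1⁻¹) YQ * pcomm R3 YQ := by
    simp only [qQ]; exact pcomm_mul_left_c R3 (inR_pre.cen YQ)
  have e2 : pcomm (R2⁻¹ * R1⁻¹) YQ = pcomm R2⁻¹ YQ * pcomm R1⁻¹ YQ :=
    pcomm_mul_left_c R1⁻¹ ((inR_inv inR_R2).cen YQ)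
  have e3 : pcomm R2⁻¹ YQ = (pcomm R2 YQ)⁻¹ := pcomm_inv_left_c (inR_R2.cen YQ)
  have e4 : pcomm R1⁻¹ YQ = (pcomm R1 YQ)⁻¹ := pcomm_inv_left_c (inR_R1.cen YQ)
  rw [e, e2, e3, e4, hB2, B3_eq_B1]
  group

lemma comm_eq : pcomm YQ XQ = YQ * rQ := by
  simp only [rQ, qQ, R1, R2, R3, pcomm]; group

lemma t1Q : pcomm (pcomm YQ XQ) YQ = 1 := by
  rw [comm_eq, pcomm_mul_self]; exact key1
-- appended part, tested together with t3 content
lemma t2Q : pcomm (pcomm (pcomm XQ YQ) XQ) YQ = 1 := by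
  have s1 : pcomm XQ YQ = rQ⁻¹ * YQ⁻¹ := by
    rw [pcomm_swap YQ XQ, comm_eq, mul_inv_rev]
  rw [s1]
  have s2 : pcomm (rQ⁻¹ * YQ⁻¹) XQ = pcomm rQ⁻¹ XQ * pcomm YQ⁻¹ XQ := by
    rw [pcomm_mul_left, conj_eq_of_central (inR_rinv.cen XQ)]
  rw [s2, pcomm_mul_left, pcomm_central_one (inR_rinv.cen XQ) YQ]
  have s3 : pcomm (pcomm YQ⁻¹ XQ) YQ = 1 := by
    have s4 : pcomm YQ⁻¹ XQ = (YQ * rQ⁻¹ * YQ⁻¹) * YQ⁻¹ := by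
      rw [pcomm_inv_first, comm_eq]; group
    rw [s4, pcomm_mul_left_c YQ⁻¹ (inR_rdot.cen YQ)]
    have s5 : pcomm (YQ * rQ⁻¹ * YQ⁻¹) YQ = pcomm rQ⁻¹ YQ := by
      have h : YQ * rQ⁻¹ * YQ⁻¹ = (YQ⁻¹)⁻¹ * rQ⁻¹ * YQ⁻¹ := by rw [inv_inv]
      rw [h, pcomm_conj_left_c _ _ inR_rinv.cen]
    rw [s5, pcomm_inv_left_c (inR_r.cen YQ), key1]
    simp only [pcomm]; group
  rw [s3]
  group

lemma t3Q : pcomm (pcomm (pcomm YQ XQ) XQ) YQ = 1 := by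
  have m2 : pcomm (pcomm YQ XQ) XQ
      = pcomm YQ XQ * (pcomm (pcomm YQ XQ) rQ * pcomm rQ XQ) := by
    conv_lhs => rw [comm_eq]
    rw [pcomm_mul_left, conj_eq_mul_pcomm (pcomm YQ XQ) rQ, mul_assoc]
  have hz1 : ∀ u, pcomm (pcomm YQ XQ) rQ * u = u * pcomm (pcomm YQ XQ) rQ := by
    intro u
    rw [pcomm_swap rQ (pcomm YQ XQ)]
    exact central_inv (inR_r.cen (pcomm YQ XQ)) u
  have hz : ∀ u, (pcomm (pcomm YQ XQ) rQ * pcomm rQ XQ) * u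
      = u * (pcomm (pcomm YQ XQ) rQ * pcomm rQ XQ) :=
    central_mul hz1 (inR_r.cen XQ)
  rw [m2, pcomm_mul_left, pcomm_central_one hz YQ, t1Q]
  group

/-- **Lemma 5.3.**  With `F` free on `x, y` and `R` the normal closure of
`{x², y³, xyxy}` (so `F/R ≅ S₃`):
`[y,x,y] ∈ [[R,F],F]`, `[x,y,x,y] ∈ [[R,F],F]`, and `[y,x,x,y] ∈ [[R,F],F]`. -/
theorem lemma_5_3 :
    pcomm (pcomm yF xF) yF ∈ ⁅⁅RS3, (⊤ : Subgroup FS3)⁆, (⊤ : Subgroup FS3)⁆ ∧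
    pcomm (pcomm (pcomm xF yF) xF) yF ∈
      ⁅⁅RS3, (⊤ : Subgroup FS3)⁆, (⊤ : Subgroup FS3)⁆ ∧
    pcomm (pcomm (pcomm yF xF) xF) yF ∈
      ⁅⁅RS3, (⊤ : Subgroup FS3)⁆, (⊤ : Subgroup FS3)⁆ := by
  refine ⟨?_, ?_, ?_⟩
  · exact (QuotientGroup.eq_one_iff (N := DS3) _).mp
      ((show (QuotientGroup.mk (pcomm (pcomm yF xF) yF) : QS3)
        = pcomm (pcomm YQ XQ) YQ from rfl).trans t1Q)
  · exact (QuotientGroup.eq_one_iff (N := DS3) _).mp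
      ((show (QuotientGroup.mk (pcomm (pcomm (pcomm xF yF) xF) yF) : QS3)
        = pcomm (pcomm (pcomm XQ YQ) XQ) YQ from rfl).trans t2Q)
  · exact (QuotientGroup.eq_one_iff (N := DS3) _).mp
      ((show (QuotientGroup.mk (pcomm (pcomm (pcomm yF xF) xF) yF) : QS3)
        = pcomm (pcomm (pcomm YQ XQ) XQ) YQ from rfl).trans t3Q)
end
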